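/- arXiv:2003.12786 — 4 statements merged into one kernel-verified Lean document; each statement's English description precedes it below -/
import Mathlib

section
/- Let $n = n_x + n_u$, let $P \in \mathbb{R}^{n \times n}$ be symmetric positive definite with smallest eigenvalue $\lambda_{\min}(P)$ and largest eigenvalue $\lambda_{\max}(P)$, let $J = [\, I_{n_x} \;\; 0_{n_x \times n_u}\,] \in \mathbb{R}^{n_x \times n}$, and let $A_{\rm cl} \in \mathbb{R}^{n \times n}$. Let $\alpha > 0$, $\zeta > 0$, $k_b \ge 0$, and suppose the Loewner inequality $\mathrm{Sym}(P A_{\rm cl}) + \zeta^{-1} P J^\top J P \preceq -\alpha I_n$ holds. Let $z : \mathbb{R} \to \mathbb{R}^n$ be differentiable with $z'(t) = A_{\rm cl}\, z(t) + J^\top g(t)$ for all $t \ge 0$, where $g : \mathbb{R} \to \mathbb{R}^{n_x}$ satisfies $\|g(t)\| \le k_b$ for all $t \ge 0$. Then $\limsup_{t \to \infty} \|z(t)\| \le k_b \sqrt{\dfrac{\zeta\, \lambda_{\max}(P)}{\alpha\, \lambda_{\min}(P)}}$. -/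
/-!
Along a trajectory, the derivative of `V = zᵀ P z` is `zᵀ Sym(P A) z + 2 ⟪J P z, g⟫`. Young's
inequality `2 ⟪J P z, g⟫ ≤ ζ⁻¹ ‖J P z‖² + ζ ‖g‖²` and the Loewner inequality bound it by
`-α ‖z‖² + ζ k_b²`, and `V ≤ λ_max ‖z‖²` turns this into `V' ≤ -(α / λ_max) V + ζ k_b²`.
By Grönwall, `V(t)` is bounded by a function tending to `ζ k_b² λ_max / α`, and
`λ_min ‖z‖² ≤ V` converts this into the bound on `‖z‖`.
-/

open Matrix Filter Topology

namespace Matrix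

variable {ι m : Type*} [Fintype ι] [Fintype m]

lemma two_mul_dotProduct_le (w q : m → ℝ) {c : ℝ} (hc : 0 < c) :
    2 * (w ⬝ᵥ q) ≤ c⁻¹ * (w ⬝ᵥ w) + c * (q ⬝ᵥ q) := by
  have h := dotProduct_self_star_nonneg (w - c • q)
  simp only [star_trivial, sub_dotProduct, dotProduct_sub, smul_dotProduct, dotProduct_smul,
    smul_eq_mul, dotProduct_comm q w] at h
  refine le_of_mul_le_mul_left ?_ hc
  rw [mul_add, mul_inv_cancel_left₀ hc.ne']
  linarith

variable [DecidableEq ι]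

lemma IsHermitian.mul_dotProduct_le_of_le_eigenvalues {P : Matrix ι ι ℝ} (hP : P.IsHermitian)
    {c : ℝ} (hc : ∀ i, c ≤ hP.eigenvalues i) (x : ι → ℝ) :
    c * (x ⬝ᵥ x) ≤ x ⬝ᵥ P *ᵥ x := by
  open scoped MatrixOrder in
  have hle : algebraMap ℝ (Matrix ι ι ℝ) c ≤ P :=
    (algebraMap_le_iff_le_spectrum hP.isSelfAdjoint).2 <| by
      rw [hP.spectrum_real_eq_range_eigenvalues]; rintro _ ⟨i, rfl⟩; exact hc i
  have hquad := (le_iff.1 hle).dotProduct_mulVec_nonneg x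
  simp only [star_trivial, Algebra.algebraMap_eq_smul_one, sub_mulVec, smul_mulVec, one_mulVec,
    dotProduct_sub, dotProduct_smul, smul_eq_mul] at hquad
  linarith

lemma IsHermitian.dotProduct_le_mul_of_eigenvalues_le {P : Matrix ι ι ℝ} (hP : P.IsHermitian)
    {c : ℝ} (hc : ∀ i, hP.eigenvalues i ≤ c) (x : ι → ℝ) :
    x ⬝ᵥ P *ᵥ x ≤ c * (x ⬝ᵥ x) := by
  open scoped MatrixOrder in
  have hle : P ≤ algebraMap ℝ (Matrix ι ι ℝ) c :=
    (le_algebraMap_iff_spectrum_le hP.isSelfAdjoint).2 <| by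
      rw [hP.spectrum_real_eq_range_eigenvalues]; rintro _ ⟨i, rfl⟩; exact hc i
  have hquad := (le_iff.1 hle).dotProduct_mulVec_nonneg x
  simp only [star_trivial, Algebra.algebraMap_eq_smul_one, sub_mulVec, smul_mulVec, one_mulVec,
    dotProduct_sub, dotProduct_smul, smul_eq_mul] at hquad
  linarith

lemma dissipation_le_of_posSemidef {P A : Matrix ι ι ℝ} {J : Matrix m ι ℝ} (hP : P.IsSymm)
    {α ζ : ℝ} (hζ : 0 < ζ)
    (hLoewner :
      ((-α) • (1 : Matrix ι ι ℝ) - (P * A + (P * A)ᵀ + ζ⁻¹ • (P * Jᵀ * J * P))).PosSemidef)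
    (x : ι → ℝ) (w : m → ℝ) :
    (A *ᵥ x + Jᵀ *ᵥ w) ⬝ᵥ P *ᵥ x + x ⬝ᵥ P *ᵥ (A *ᵥ x + Jᵀ *ᵥ w)
      ≤ -α * (x ⬝ᵥ x) + ζ * (w ⬝ᵥ w) := by
  have hLx := hLoewner.dotProduct_mulVec_nonneg x
  simp only [star_trivial, sub_mulVec, add_mulVec, smul_mulVec, one_mulVec, dotProduct_sub,
    dotProduct_add, dotProduct_smul, smul_eq_mul, dotProduct_transpose_mulVec] at hLx
  have hcross : x ⬝ᵥ P *ᵥ Jᵀ *ᵥ w = (J * P) *ᵥ x ⬝ᵥ w := by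
    rw [mulVec_mulVec, ← hP.eq, ← transpose_mul, dotProduct_transpose_mulVec, dotProduct_comm,
      hP.eq]
  have hgain : (J * P) *ᵥ x ⬝ᵥ (J * P) *ᵥ x = x ⬝ᵥ (P * Jᵀ * J * P) *ᵥ x := by
    rw [← dotProduct_transpose_mulVec, mulVec_mulVec, transpose_mul, hP.eq]
    simp only [Matrix.mul_assoc]
  have hyoung := two_mul_dotProduct_le ((J * P) *ᵥ x) w hζ
  rw [← dotProduct_transpose_mulVec P x, hP.eq, mulVec_add, dotProduct_add, hcross, mulVec_mulVec]
  rw [hgain] at hyoung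
  linarith

end Matrix

lemma EuclideanSpace.norm_sq_eq_dotProduct {ι : Type*} [Fintype ι] (x : EuclideanSpace ℝ ι) :
    ‖x‖ ^ 2 = x.ofLp ⬝ᵥ x.ofLp := by
  rw [← real_inner_self_eq_norm_sq, EuclideanSpace.inner_eq_star_dotProduct, star_trivial]

lemma HasDerivAt.dotProduct_mulVec {ι : Type*} [Fintype ι] {z : ℝ → EuclideanSpace ℝ ι}
    {z' : EuclideanSpace ℝ ι} {t : ℝ} (hz : HasDerivAt z z' t) (P : Matrix ι ι ℝ) :
    HasDerivAt (fun s ↦ (z s).ofLp ⬝ᵥ P *ᵥ (z s).ofLp)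
      (z'.ofLp ⬝ᵥ P *ᵥ (z t).ofLp + (z t).ofLp ⬝ᵥ P *ᵥ z'.ofLp) t := by
  classical
  have hPz := (toEuclideanCLM (𝕜 := ℝ) P).hasFDerivAt.comp_hasDerivAt t hz
  simpa only [EuclideanSpace.inner_eq_star_dotProduct, star_trivial, Function.comp_def,
    ofLp_toEuclideanCLM] using hPz.inner ℝ hz

lemma le_gronwallBound_of_hasDerivAt_le {V V' : ℝ → ℝ} {K ε a : ℝ}
    (hV : ∀ t, a ≤ t → HasDerivAt V (V' t) t) (bound : ∀ t, a ≤ t → V' t ≤ K * V t + ε)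
    {t : ℝ} (ht : a ≤ t) : V t ≤ gronwallBound (V a) K ε (t - a) :=
  le_gronwallBound_of_liminf_deriv_right_le (b := t)
    (fun s hs ↦ (hV s hs.1).continuousAt.continuousWithinAt)
    (fun s hs _ hr ↦ (hV s hs.1).hasDerivWithinAt.liminf_right_slope_le hr) le_rfl
    (fun s hs ↦ bound s hs.1) t ⟨ht, le_rfl⟩

lemma tendsto_gronwallBound_atTop {δ K ε : ℝ} (hK : K < 0) :
    Tendsto (gronwallBound δ K ε) atTop (𝓝 (-ε / K)) := by
  have hexp : Tendsto (fun x ↦ Real.exp (K * x)) atTop (𝓝 0) :=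
    Real.tendsto_exp_atBot.comp (tendsto_id.const_mul_atTop_of_neg hK)
  rw [gronwallBound_of_K_ne_0 hK.ne]
  convert (hexp.const_mul δ).add ((hexp.sub_const 1).const_mul (ε / K)) using 2
  ring

theorem limsup_norm_le_of_quadratic_lyapunov {ι m : Type*} [Fintype ι] [Fintype m]
    [DecidableEq ι] {P A : Matrix ι ι ℝ} {J : Matrix m ι ℝ} (hP : P.IsSymm)
    {cmin cmax α ζ kb : ℝ} (hcmin : 0 < cmin) (hcmax : 0 < cmax)
    (hlow : ∀ x, cmin * (x ⬝ᵥ x) ≤ x ⬝ᵥ P *ᵥ x)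
    (hup : ∀ x, x ⬝ᵥ P *ᵥ x ≤ cmax * (x ⬝ᵥ x))
    (hα : 0 < α) (hζ : 0 < ζ) (hkb : 0 ≤ kb)
    (hLoewner :
      ((-α) • (1 : Matrix ι ι ℝ) - (P * A + (P * A)ᵀ + ζ⁻¹ • (P * Jᵀ * J * P))).PosSemidef)
    {z : ℝ → EuclideanSpace ℝ ι} {g : ℝ → EuclideanSpace ℝ m}
    (hg : ∀ t, 0 ≤ t → ‖g t‖ ≤ kb)
    (hz : ∀ t, 0 ≤ t → HasDerivAt z (WithLp.toLp 2 (A *ᵥ z t + Jᵀ *ᵥ g t)) t) :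
    limsup (fun t ↦ ‖z t‖) atTop ≤ kb * √(ζ * cmax / (α * cmin)) := by
  set V : ℝ → ℝ := fun s ↦ (z s).ofLp ⬝ᵥ P *ᵥ (z s).ofLp
  set K := -(α / cmax)
  have hK : K < 0 := neg_neg_iff_pos.2 (div_pos hα hcmax)
  set V' : ℝ → ℝ := fun t ↦
    (A *ᵥ z t + Jᵀ *ᵥ g t) ⬝ᵥ P *ᵥ z t + z t ⬝ᵥ P *ᵥ (A *ᵥ z t + Jᵀ *ᵥ g t)
  have hV : ∀ t, 0 ≤ t → HasDerivAt V (V' t) t := fun t ht ↦ (hz t ht).dotProduct_mulVec P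
  have hdecay : ∀ t, 0 ≤ t → V' t ≤ K * V t + ζ * kb ^ 2 := fun t ht ↦ by
    have hdiss := dissipation_le_of_posSemidef hP hζ hLoewner (z t).ofLp (g t).ofLp
    have hVx : α / cmax * V t ≤ α * ((z t).ofLp ⬝ᵥ (z t).ofLp) := by
      rw [div_mul_eq_mul_div, div_le_iff₀ hcmax, mul_assoc]
      exact mul_le_mul_of_nonneg_left (by linarith [hup (z t).ofLp]) hα.le
    have hgt : ζ * ((g t).ofLp ⬝ᵥ (g t).ofLp) ≤ ζ * kb ^ 2 := by
      rw [← EuclideanSpace.norm_sq_eq_dotProduct]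
      exact mul_le_mul_of_nonneg_left (pow_le_pow_left₀ (norm_nonneg _) (hg t ht) 2) hζ.le
    linarith
  have hbound : ∀ t, 0 ≤ t → ‖z t‖ ≤ √(gronwallBound (V 0) K (ζ * kb ^ 2) t / cmin) := by
    intro t ht
    apply Real.le_sqrt_of_sq_le
    rw [le_div_iff₀' hcmin, EuclideanSpace.norm_sq_eq_dotProduct]
    simpa using (hlow _).trans (le_gronwallBound_of_hasDerivAt_le hV hdecay ht)
  have hlim : Tendsto (fun t ↦ √(gronwallBound (V 0) K (ζ * kb ^ 2) t / cmin)) atTop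
      (𝓝 (kb * √(ζ * cmax / (α * cmin)))) := by
    have hval : -(ζ * kb ^ 2) / K / cmin = kb ^ 2 * (ζ * cmax / (α * cmin)) := by
      simp only [K]
      field_simp
    have hV_lim := (tendsto_gronwallBound_atTop (δ := V 0) (ε := ζ * kb ^ 2) hK).div_const cmin
    have hsqrt_lim := hV_lim.sqrt
    rwa [hval, Real.sqrt_mul (sq_nonneg _), Real.sqrt_sq hkb] at hsqrt_lim
  calc limsup (fun t ↦ ‖z t‖) atTop
      ≤ limsup (fun t ↦ √(gronwallBound (V 0) K (ζ * kb ^ 2) t / cmin)) atTop :=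
        limsup_le_limsup ((eventually_ge_atTop 0).mono hbound)
          (isCoboundedUnder_le_of_le atTop fun t ↦ norm_nonneg _) hlim.isBoundedUnder_le
    _ = kb * √(ζ * cmax / (α * cmin)) := hlim.limsup_eq

theorem continuous_time_practical_stability_general
    {nx nu : ℕ}
    (P : Matrix (Fin nx ⊕ Fin nu) (Fin nx ⊕ Fin nu) ℝ) (hP : P.PosDef)
    (lmin lmax : ℝ)
    (hlmin : lmin = ⨅ i, hP.1.eigenvalues i)
    (hlmax : lmax = ⨆ i, hP.1.eigenvalues i)
    (J : Matrix (Fin nx) (Fin nx ⊕ Fin nu) ℝ)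
    (Acl : Matrix (Fin nx ⊕ Fin nu) (Fin nx ⊕ Fin nu) ℝ)
    (α ζ kb : ℝ) (hα : 0 < α) (hζ : 0 < ζ) (hkb : 0 ≤ kb)
    (hLoewner : ((-α) • (1 : Matrix (Fin nx ⊕ Fin nu) (Fin nx ⊕ Fin nu) ℝ)
        - (P * Acl + (P * Acl)ᵀ + ζ⁻¹ • (P * Jᵀ * J * P))).PosSemidef)
    (z : ℝ → EuclideanSpace ℝ (Fin nx ⊕ Fin nu))
    (g : ℝ → EuclideanSpace ℝ (Fin nx))
    (hg : ∀ t, 0 ≤ t → ‖g t‖ ≤ kb)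
    (hz : ∀ t, 0 ≤ t → HasDerivAt z
      (WithLp.toLp 2 (Acl.mulVec (z t) + Jᵀ.mulVec (g t) :
          (Fin nx ⊕ Fin nu) → ℝ) : EuclideanSpace ℝ (Fin nx ⊕ Fin nu)) t) :
    Filter.limsup (fun t => ‖z t‖) Filter.atTop
      ≤ kb * Real.sqrt (ζ * lmax / (α * lmin)) := by
  -- Without coordinates the infimum over the empty spectrum is the junk value `lmin = 0`.
  rcases isEmpty_or_nonempty (Fin nx ⊕ Fin nu) with hE | hE
  · have hz0 : (fun t ↦ ‖z t‖) = fun _ ↦ 0 :=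
      funext fun t ↦ by simp [Subsingleton.elim (z t) 0]
    rw [hz0, limsup_const]
    positivity
  · have hmin : ∀ i, lmin ≤ hP.1.eigenvalues i := hlmin ▸ ciInf_le (Finite.bddBelow_range _)
    have hmax : ∀ i, hP.1.eigenvalues i ≤ lmax := hlmax ▸ le_ciSup (Finite.bddAbove_range _)
    have hlmin_pos : 0 < lmin := by
      obtain ⟨i, hi⟩ := exists_eq_ciInf_of_finite (f := hP.1.eigenvalues)
      exact hlmin ▸ hi ▸ hP.eigenvalues_pos i
    have hlmax_pos : 0 < lmax :=
      hlmin_pos.trans_le ((hmin (Classical.arbitrary _)).trans (hmax _))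
    exact limsup_norm_le_of_quadratic_lyapunov (isHermitian_iff_isSymm.1 hP.1) hlmin_pos
      hlmax_pos (hP.1.mul_dotProduct_le_of_le_eigenvalues hmin)
      (hP.1.dotProduct_le_mul_of_eigenvalues_le hmax) hα hζ hkb hLoewner hg hz

/-- Analytic core of the continuous-time robust regulation result.  Let `n = n_x + n_u`,
`P ≻ 0` symmetric with smallest/largest eigenvalues `λmin, λmax`, `J = [I_{n_x} 0]`,
and suppose the Loewner inequality `Sym(P A_cl) + ζ⁻¹ P Jᵀ J P ⪯ -α I` holds with
`α, ζ > 0`.  If `z' = A_cl z + Jᵀ g` with `‖g(t)‖ ≤ k_b` for `t ≥ 0`, then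
`limsup_{t→∞} ‖z(t)‖ ≤ k_b √(ζ λmax / (α λmin))`. -/
theorem continuous_time_practical_stability
    {nx nu : ℕ}
    (P : Matrix (Fin nx ⊕ Fin nu) (Fin nx ⊕ Fin nu) ℝ) (hP : P.PosDef)
    (lmin lmax : ℝ)
    (hlmin : lmin = ⨅ i, hP.1.eigenvalues i)
    (hlmax : lmax = ⨆ i, hP.1.eigenvalues i)
    (J : Matrix (Fin nx) (Fin nx ⊕ Fin nu) ℝ)
    (hJ : J = Matrix.fromCols 1 0)
    (Acl : Matrix (Fin nx ⊕ Fin nu) (Fin nx ⊕ Fin nu) ℝ)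
    (α ζ kb : ℝ) (hα : 0 < α) (hζ : 0 < ζ) (hkb : 0 ≤ kb)
    (hLoewner : ((-α) • (1 : Matrix (Fin nx ⊕ Fin nu) (Fin nx ⊕ Fin nu) ℝ)
        - (P * Acl + (P * Acl)ᵀ + ζ⁻¹ • (P * Jᵀ * J * P))).PosSemidef)
    (z : ℝ → EuclideanSpace ℝ (Fin nx ⊕ Fin nu))
    (g : ℝ → EuclideanSpace ℝ (Fin nx))
    (hg : ∀ t, 0 ≤ t → ‖g t‖ ≤ kb)
    (hz : ∀ t, 0 ≤ t → HasDerivAt z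
      (WithLp.toLp 2 (Acl.mulVec (z t) + Jᵀ.mulVec (g t) :
          (Fin nx ⊕ Fin nu) → ℝ) : EuclideanSpace ℝ (Fin nx ⊕ Fin nu)) t) :
    Filter.limsup (fun t => ‖z t‖) Filter.atTop
      ≤ kb * Real.sqrt (ζ * lmax / (α * lmin)) :=
  continuous_time_practical_stability_general P hP lmin lmax hlmin hlmax J Acl α ζ kb hα hζ hkb
    hLoewner z g hg hz
end

section
/- Let $n = n_x + n_u$, let $P \in \mathbb{R}^{n \times n}$ be symmetric, $J = [\, I_{n_x} \;\; 0_{n_x \times n_u}\,] \in \mathbb{R}^{n_x \times n}$, $A_{\rm cl} \in \mathbb{R}^{n \times n}$, $M_1 \in \mathbb{R}^{n \times m_1}$, $M_2 \in \mathbb{R}^{n \times m_2}$, and let $\alpha, \zeta, \psi_1, \psi_2 > 0$, $k_b, \vartheta, \beta \ge 0$. Suppose $\mathrm{Sym}(P A_{\rm cl}) + \zeta^{-1} P J^\top J P \preceq -\alpha I_n$, $\|P M_1\| \le \vartheta$ and $\|P M_2\| \le \beta$ (operator norms). Then for all $z \in \mathbb{R}^n$, $e \in \mathbb{R}^{m_1}$,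 $\bar z \in \mathbb{R}^{m_2}$, and $b \in \mathbb{R}^{n_x}$ with $\|b\| \le k_b$: $2\, z^\top P \big( A_{\rm cl} z + M_1 e + M_2 \bar z + J^\top b \big) \;\le\; -\big(\alpha - \psi_1 \vartheta^2 - \psi_2 \beta^2\big)\|z\|^2 + \zeta k_b^2 + \psi_1^{-1}\|e\|^2 + \psi_2^{-1}\|\bar z\|^2$. -/
/-!
Expanding `zᵀ P (A_cl z + M₁ e + M₂ z̄ + Jᵀ b)` gives the quadratic term `zᵀ P A_cl z` and three
cross terms `zᵀ P M₁ e`, `zᵀ P M₂ z̄` and `(J P z)ᵀ b`. Each cross term is split by the weighted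
Young inequality `2xy ≤ ψx² + ψ⁻¹y²`, with weights `ψ₁`, `ψ₂` and `ζ⁻¹`; the last split produces
exactly the term `ζ⁻¹ ‖J P z‖² = ζ⁻¹ zᵀ P Jᵀ J P z` that the Loewner inequality absorbs together
with `2 zᵀ P A_cl z`.
-/

open Matrix

/-- The operator (spectral) norm of a real matrix, i.e. the operator norm of the induced
linear map between the corresponding Euclidean spaces. -/
noncomputable def opNorm {m n : Type*} [Fintype m] [Fintype n] [DecidableEq n]
    (M : Matrix m n ℝ) : ℝ :=
  ‖LinearMap.toContinuousLinearMap (Matrix.toEuclideanLin M)‖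

theorem two_mul_le_mul_sq_add_inv_mul_sq {ψ : ℝ} (hψ : 0 < ψ) (x y : ℝ) :
    2 * (x * y) ≤ ψ * x ^ 2 + ψ⁻¹ * y ^ 2 := by
  have hsq : 0 ≤ ψ⁻¹ * (ψ * x - y) ^ 2 := by positivity
  have hψ₀ : ψ ≠ 0 := hψ.ne'
  calc 2 * (x * y) = ψ * x ^ 2 + ψ⁻¹ * y ^ 2 - ψ⁻¹ * (ψ * x - y) ^ 2 := by field_simp; ring
    _ ≤ ψ * x ^ 2 + ψ⁻¹ * y ^ 2 := by linarith

theorem two_mul_real_inner_le {E : Type*} [NormedAddCommGroup E] [InnerProductSpace ℝ E]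
    {ψ : ℝ} (hψ : 0 < ψ) (x y : E) :
    2 * inner ℝ x y ≤ ψ * ‖x‖ ^ 2 + ψ⁻¹ * ‖y‖ ^ 2 := by
  linarith [real_inner_le_norm x y, two_mul_le_mul_sq_add_inv_mul_sq hψ ‖x‖ ‖y‖]

namespace EuclideanSpace

variable {ι : Type*} [Fintype ι]

theorem dotProduct_eq_real_inner (x y : EuclideanSpace ℝ ι) :
    (x : ι → ℝ) ⬝ᵥ (y : ι → ℝ) = inner ℝ x y := by
  rw [inner_eq_star_dotProduct, star_trivial, dotProduct_comm]

theorem norm_sq_eq_dotProduct_s5 (x : EuclideanSpace ℝ ι) :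
    ‖x‖ ^ 2 = (x : ι → ℝ) ⬝ᵥ (x : ι → ℝ) := by
  rw [dotProduct_eq_real_inner, real_inner_self_eq_norm_sq]

end EuclideanSpace

section OpNorm

variable {p q : Type*} [Fintype p] [Fintype q] [DecidableEq q]

theorem dotProduct_mulVec_le_opNorm_mul (M : Matrix p q ℝ)
    (y : EuclideanSpace ℝ p) (x : EuclideanSpace ℝ q) :
    (y : p → ℝ) ⬝ᵥ M *ᵥ (x : q → ℝ) ≤ opNorm M * ‖y‖ * ‖x‖ := by
  calc (y : p → ℝ) ⬝ᵥ M *ᵥ (x : q → ℝ) = inner ℝ y (toEuclideanLin M x) :=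
        EuclideanSpace.dotProduct_eq_real_inner y (toEuclideanLin M x)
    _ ≤ ‖y‖ * ‖toEuclideanLin M x‖ := real_inner_le_norm _ _
    _ ≤ ‖y‖ * (opNorm M * ‖x‖) :=
        mul_le_mul_of_nonneg_left
          ((LinearMap.toContinuousLinearMap (toEuclideanLin M)).le_opNorm x) (norm_nonneg y)
    _ = opNorm M * ‖y‖ * ‖x‖ := by ring

theorem two_mul_dotProduct_mulVec_le {M : Matrix p q ℝ} {c ψ : ℝ} (hM : opNorm M ≤ c)
    (hψ : 0 < ψ) (y : EuclideanSpace ℝ p) (x : EuclideanSpace ℝ q) :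
    2 * ((y : p → ℝ) ⬝ᵥ M *ᵥ (x : q → ℝ)) ≤ ψ * c ^ 2 * ‖y‖ ^ 2 + ψ⁻¹ * ‖x‖ ^ 2 := by
  have hc : opNorm M * ‖y‖ * ‖x‖ ≤ c * ‖y‖ * ‖x‖ := by gcongr
  linarith [dotProduct_mulVec_le_opNorm_mul M y x,
    two_mul_le_mul_sq_add_inv_mul_sq hψ (c * ‖y‖) ‖x‖]

end OpNorm

theorem Matrix.PosSemidef.two_mul_dotProduct_mulVec_add_le {n : Type*} [Fintype n]
    [DecidableEq n] {A B : Matrix n n ℝ} {c : ℝ}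
    (h : (c • (1 : Matrix n n ℝ) - (A + Aᵀ + B)).PosSemidef) (x : n → ℝ) :
    2 * (x ⬝ᵥ A *ᵥ x) + x ⬝ᵥ B *ᵥ x ≤ c * (x ⬝ᵥ x) := by
  have hq := h.dotProduct_mulVec_nonneg x
  have htranspose : x ⬝ᵥ Aᵀ *ᵥ x = x ⬝ᵥ A *ᵥ x := by
    rw [dotProduct_mulVec, vecMul_transpose, dotProduct_comm]
  rw [star_trivial, sub_mulVec, add_mulVec, add_mulVec, smul_mulVec, one_mulVec, dotProduct_sub,
    dotProduct_add, dotProduct_add, dotProduct_smul, smul_eq_mul, htranspose] at hq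
  linarith

theorem Matrix.dotProduct_mulVec_transpose_mul_self {m n : Type*} [Fintype m] [Fintype n]
    (C : Matrix m n ℝ) (x : n → ℝ) : x ⬝ᵥ (Cᵀ * C) *ᵥ x = C *ᵥ x ⬝ᵥ C *ᵥ x := by
  rw [← mulVec_mulVec, dotProduct_mulVec, vecMul_transpose]

theorem lyapunov_derivative_estimate_general
    {nx nu m1 m2 : ℕ}
    (P : Matrix (Fin nx ⊕ Fin nu) (Fin nx ⊕ Fin nu) ℝ) (hP : P.IsSymm)
    (J : Matrix (Fin nx) (Fin nx ⊕ Fin nu) ℝ)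
    (Acl : Matrix (Fin nx ⊕ Fin nu) (Fin nx ⊕ Fin nu) ℝ)
    (M1 : Matrix (Fin nx ⊕ Fin nu) (Fin m1) ℝ)
    (M2 : Matrix (Fin nx ⊕ Fin nu) (Fin m2) ℝ)
    (α ζ ψ1 ψ2 : ℝ) (hζ : 0 < ζ) (hψ1 : 0 < ψ1) (hψ2 : 0 < ψ2)
    (kb ϑ β : ℝ)
    (hLoewner : ((-α) • (1 : Matrix (Fin nx ⊕ Fin nu) (Fin nx ⊕ Fin nu) ℝ)
        - (P * Acl + (P * Acl)ᵀ + ζ⁻¹ • (P * Jᵀ * J * P))).PosSemidef)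
    (hM1 : opNorm (P * M1) ≤ ϑ) (hM2 : opNorm (P * M2) ≤ β)
    (z : EuclideanSpace ℝ (Fin nx ⊕ Fin nu))
    (e : EuclideanSpace ℝ (Fin m1)) (zbar : EuclideanSpace ℝ (Fin m2))
    (b : EuclideanSpace ℝ (Fin nx)) (hb : ‖b‖ ≤ kb) :
    2 * ((z : (Fin nx ⊕ Fin nu) → ℝ) ⬝ᵥ
        P.mulVec (Acl.mulVec z + M1.mulVec e + M2.mulVec zbar + Jᵀ.mulVec b))
      ≤ -(α - ψ1 * ϑ ^ 2 - ψ2 * β ^ 2) * ‖z‖ ^ 2 + ζ * kb ^ 2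
        + ψ1⁻¹ * ‖e‖ ^ 2 + ψ2⁻¹ * ‖zbar‖ ^ 2 := by
  set w : EuclideanSpace ℝ (Fin nx) := WithLp.toLp 2 ((J * P) *ᵥ (z : (Fin nx ⊕ Fin nu) → ℝ))
  have hJP : (J * P)ᵀ = P * Jᵀ := by rw [transpose_mul, hP.eq]
  have hsplit : (z : (Fin nx ⊕ Fin nu) → ℝ) ⬝ᵥ
        P *ᵥ (Acl *ᵥ z + M1 *ᵥ e + M2 *ᵥ zbar + Jᵀ *ᵥ b)
      = (z : (Fin nx ⊕ Fin nu) → ℝ) ⬝ᵥ (P * Acl) *ᵥ z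
        + (z : (Fin nx ⊕ Fin nu) → ℝ) ⬝ᵥ (P * M1) *ᵥ e
        + (z : (Fin nx ⊕ Fin nu) → ℝ) ⬝ᵥ (P * M2) *ᵥ zbar + inner ℝ w b := by
    simp only [mulVec_add, dotProduct_add, mulVec_mulVec]
    rw [← hJP, dotProduct_mulVec _ (J * P)ᵀ, vecMul_transpose,
      ← EuclideanSpace.dotProduct_eq_real_inner]
  have hquad := hLoewner.two_mul_dotProduct_mulVec_add_le z
  rw [← hJP, Matrix.mul_assoc, smul_mulVec, dotProduct_smul,
    dotProduct_mulVec_transpose_mul_self, smul_eq_mul,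
    ← EuclideanSpace.norm_sq_eq_dotProduct_s5 z, ← EuclideanSpace.norm_sq_eq_dotProduct_s5 w] at hquad
  have he := two_mul_dotProduct_mulVec_le hM1 hψ1 z e
  have hzbar := two_mul_dotProduct_mulVec_le hM2 hψ2 z zbar
  have hwb := two_mul_real_inner_le (inv_pos.2 hζ) w b
  rw [inv_inv] at hwb
  have hb2 : ζ * ‖b‖ ^ 2 ≤ ζ * kb ^ 2 := by gcongr
  rw [hsplit]
  linarith

/-- Pointwise Lyapunov-derivative estimate used in the event-triggered analysis:
if `Sym(P A_cl) + ζ⁻¹ P Jᵀ J P ⪯ -α I`, `‖P M₁‖ ≤ ϑ`, `‖P M₂‖ ≤ β`, `‖b‖ ≤ k_b`, then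
`2 zᵀ P (A_cl z + M₁ e + M₂ z̄ + Jᵀ b)
  ≤ -(α - ψ₁ϑ² - ψ₂β²)‖z‖² + ζ k_b² + ψ₁⁻¹‖e‖² + ψ₂⁻¹‖z̄‖²`. -/
theorem lyapunov_derivative_estimate
    {nx nu m1 m2 : ℕ}
    (P : Matrix (Fin nx ⊕ Fin nu) (Fin nx ⊕ Fin nu) ℝ) (hP : P.IsSymm)
    (J : Matrix (Fin nx) (Fin nx ⊕ Fin nu) ℝ)
    (hJ : J = Matrix.fromCols 1 0)
    (Acl : Matrix (Fin nx ⊕ Fin nu) (Fin nx ⊕ Fin nu) ℝ)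
    (M1 : Matrix (Fin nx ⊕ Fin nu) (Fin m1) ℝ)
    (M2 : Matrix (Fin nx ⊕ Fin nu) (Fin m2) ℝ)
    (α ζ ψ1 ψ2 : ℝ) (hα : 0 < α) (hζ : 0 < ζ) (hψ1 : 0 < ψ1) (hψ2 : 0 < ψ2)
    (kb ϑ β : ℝ) (hkb : 0 ≤ kb) (hϑ : 0 ≤ ϑ) (hβ : 0 ≤ β)
    (hLoewner : ((-α) • (1 : Matrix (Fin nx ⊕ Fin nu) (Fin nx ⊕ Fin nu) ℝ)
        - (P * Acl + (P * Acl)ᵀ + ζ⁻¹ • (P * Jᵀ * J * P))).PosSemidef)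
    (hM1 : opNorm (P * M1) ≤ ϑ) (hM2 : opNorm (P * M2) ≤ β)
    (z : EuclideanSpace ℝ (Fin nx ⊕ Fin nu))
    (e : EuclideanSpace ℝ (Fin m1)) (zbar : EuclideanSpace ℝ (Fin m2))
    (b : EuclideanSpace ℝ (Fin nx)) (hb : ‖b‖ ≤ kb) :
    2 * ((z : (Fin nx ⊕ Fin nu) → ℝ) ⬝ᵥ
        P.mulVec (Acl.mulVec z + M1.mulVec e + M2.mulVec zbar + Jᵀ.mulVec b))
      ≤ -(α - ψ1 * ϑ ^ 2 - ψ2 * β ^ 2) * ‖z‖ ^ 2 + ζ * kb ^ 2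
        + ψ1⁻¹ * ‖e‖ ^ 2 + ψ2⁻¹ * ‖zbar‖ ^ 2 :=
  lyapunov_derivative_estimate_general P hP J Acl M1 M2 α ζ ψ1 ψ2 hζ hψ1 hψ2 kb ϑ β hLoewner hM1 hM2
    z e zbar b hb
end

section
/- Let $\alpha, \zeta, \vartheta_B, \vartheta_{AB}, \beta, \varrho_B, \varrho_{AB}, c, \lambda_{\min}, \lambda_{\max}$ be strictly positive reals with $\lambda_{\min} \le \lambda_{\max}$, and let $k_b \ge 0$. Define $\mathfrak{e}(h) = \vartheta_{AB}^{-1}(e^{\vartheta_{AB} h} - 1)$ for $h \ge 0$, and for $\bar h \ge 0$, $q_1 > 0$ define $D(\bar h, q_1) = -\vartheta_B^2\big(2 q_1 c^2 + 6 q_1 \varrho_B c^4 \mathfrak{e}^2(\bar h) + 6 \varrho_{AB} c^2 \mathfrak{e}^2(\bar h)\big) - 3\beta^2(\varrho_B q_1 c^2 + \varrho_{AB})^2 \mathfrak{e}^2(\bar h) + \alpha^2 \dfrac{\sqrt{q_1}\, \lambda_{\min}}{(1 + 2\sqrt{q_1})^2 \lambda_{\max}}$, $\mathfrak{f}_1(\bar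 h, q_1) = \dfrac{\vartheta_B^2(2 + 6\varrho_B c^2 \mathfrak{e}^2(\bar h)) c^4 + 3\beta^2 \varrho_B c^4 \mathfrak{e}^2(\bar h)}{D(\bar h, q_1)}$, and $\mathfrak{f}_2(\bar h, q_1) = \dfrac{6\vartheta_B^2 c^6 \mathfrak{e}^2(\bar h) + 3\beta^2 c^4 \mathfrak{e}^2(\bar h) + \alpha \zeta c^2 \sqrt{q_1}(1 + 2\sqrt{q_1})^{-1}}{D(\bar h, q_1)}$. Then there exists $\bar q > 0$ such that for every $q_1 \in (0, \bar q)$ the iterated limit $L(q_1) := \lim_{q_0 \to 0^+} \lim_{\bar h \to 0^+} \sqrt{\mathfrak{f}_1(\bar h, q_1)\, q_0 + \mathfrak{f}_2(\bar h, q_1)\, k_b^2}$ exists, and $\lim_{q_1 \to 0^+} L(q_1) = k_b\, c\, \sqrt{\dfrac{\zeta\, \lambda_{\max}}{\alpha\, \lambda_{\min}}}$. -/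
/-- `𝔢(h) = ϑ_{AB}⁻¹ (e^{ϑ_{AB} h} - 1)`. -/
noncomputable def efun (ϑAB h : ℝ) : ℝ := ϑAB⁻¹ * (Real.exp (ϑAB * h) - 1)

/-- The common denominator `D(h̄, q₁)` of `𝔣₁` and `𝔣₂`. -/
noncomputable def Dden (α ϑB β ρB ρAB c lmin lmax ϑAB hbar q1 : ℝ) : ℝ :=
  -ϑB ^ 2 * (2 * q1 * c ^ 2 + 6 * q1 * ρB * c ^ 4 * efun ϑAB hbar ^ 2
      + 6 * ρAB * c ^ 2 * efun ϑAB hbar ^ 2)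
    - 3 * β ^ 2 * (ρB * q1 * c ^ 2 + ρAB) ^ 2 * efun ϑAB hbar ^ 2
    + α ^ 2 * (Real.sqrt q1 * lmin / ((1 + 2 * Real.sqrt q1) ^ 2 * lmax))

/-- `𝔣₁(h̄, q₁)`. -/
noncomputable def frak1 (α ϑB β ρB ρAB c lmin lmax ϑAB hbar q1 : ℝ) : ℝ :=
  (ϑB ^ 2 * (2 + 6 * ρB * c ^ 2 * efun ϑAB hbar ^ 2) * c ^ 4
      + 3 * β ^ 2 * ρB * c ^ 4 * efun ϑAB hbar ^ 2)
    / Dden α ϑB β ρB ρAB c lmin lmax ϑAB hbar q1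

/-- `𝔣₂(h̄, q₁)`. -/
noncomputable def frak2 (α ζ ϑB β ρB ρAB c lmin lmax ϑAB hbar q1 : ℝ) : ℝ :=
  (6 * ϑB ^ 2 * c ^ 6 * efun ϑAB hbar ^ 2 + 3 * β ^ 2 * c ^ 4 * efun ϑAB hbar ^ 2
      + α * ζ * c ^ 2 * Real.sqrt q1 * (1 + 2 * Real.sqrt q1)⁻¹)
    / Dden α ϑB β ρB ρAB c lmin lmax ϑAB hbar q1

set_option maxHeartbeats 1000000 in
/-- From discrete to continuous implementation: there is `q̄ > 0` such that for every
relative threshold `q₁ ∈ (0, q̄)` the iterated limit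
`L(q₁) = lim_{q₀→0⁺} lim_{h̄→0⁺} √(𝔣₁(h̄,q₁) q₀ + 𝔣₂(h̄,q₁) k_b²)` exists, and
`lim_{q₁→0⁺} L(q₁) = k_b c √(ζ λmax / (α λmin))`, i.e. the event-triggered regulation
bound `ε_d` recovers the continuous-time bound `ε_c` as `h̄, q₀, q₁ → 0⁺`. -/
theorem discrete_to_continuous_limit
    (α ζ ϑB ϑAB β ρB ρAB c lmin lmax kb : ℝ)
    (hα : 0 < α) (hζ : 0 < ζ) (hϑB : 0 < ϑB) (hϑAB : 0 < ϑAB) (hβ : 0 < β)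
    (hρB : 0 < ρB) (hρAB : 0 < ρAB) (hc : 0 < c)
    (hlmin : 0 < lmin) (hlmax : 0 < lmax) (hll : lmin ≤ lmax) (hkb : 0 ≤ kb) :
    ∃ qbar > (0 : ℝ), ∃ L : ℝ → ℝ,
      (∀ q1 ∈ Set.Ioo (0 : ℝ) qbar,
        ∃ g : ℝ → ℝ,
          (∀ q0 > (0 : ℝ),
            Filter.Tendsto
              (fun hbar => Real.sqrt (frak1 α ϑB β ρB ρAB c lmin lmax ϑAB hbar q1 * q0
                + frak2 α ζ ϑB β ρB ρAB c lmin lmax ϑAB hbar q1 * kb ^ 2))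
              (nhdsWithin 0 (Set.Ioi 0)) (nhds (g q0))) ∧
          Filter.Tendsto g (nhdsWithin 0 (Set.Ioi 0)) (nhds (L q1))) ∧
      Filter.Tendsto L (nhdsWithin 0 (Set.Ioi 0))
        (nhds (kb * c * Real.sqrt (ζ * lmax / (α * lmin)))) := by
  classical
  have hefun0 : efun ϑAB 0 = 0 := by simp [efun]
  set A : ℝ := α ^ 2 * lmin / (lmax * (18 * ϑB ^ 2 * c ^ 2 + 1)) with hAdef
  have hApos : 0 < A := by positivity
  set qbar : ℝ := min 1 (A ^ 2) with hqbardef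
  have hqbarpos : 0 < qbar := by positivity
  -- key positivity of denominator at hbar = 0 for q1 ∈ (0, qbar)
  have key : ∀ q1 ∈ Set.Ioo (0:ℝ) qbar,
      0 < Real.sqrt q1 ∧ Real.sqrt q1 < 1 ∧
      0 < α ^ 2 * lmin / ((1 + 2 * Real.sqrt q1) ^ 2 * lmax) - 2 * ϑB ^ 2 * c ^ 2 * Real.sqrt q1 ∧
      Dden α ϑB β ρB ρAB c lmin lmax ϑAB 0 q1
        = Real.sqrt q1 * (α ^ 2 * lmin / ((1 + 2 * Real.sqrt q1) ^ 2 * lmax)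
            - 2 * ϑB ^ 2 * c ^ 2 * Real.sqrt q1) := by
    rintro q1 ⟨hq1pos, hq1lt⟩
    set s := Real.sqrt q1 with hs
    have hspos : 0 < s := Real.sqrt_pos.2 hq1pos
    have hq1s : q1 = s ^ 2 := (Real.sq_sqrt hq1pos.le).symm
    have hs1 : s < 1 := by
      have : q1 < 1 := lt_of_lt_of_le hq1lt (min_le_left _ _)
      calc s < Real.sqrt 1 := Real.sqrt_lt_sqrt hq1pos.le this
        _ = 1 := Real.sqrt_one
    have hsA : s < A := by
      have : q1 < A ^ 2 := lt_of_lt_of_le hq1lt (min_le_right _ _)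
      calc s < Real.sqrt (A ^ 2) := Real.sqrt_lt_sqrt hq1pos.le this
        _ = A := by rw [Real.sqrt_sq hApos.le]
    have hden1 : (0:ℝ) < (1 + 2 * s) ^ 2 * lmax := by positivity
    have hstuff : 0 < α ^ 2 * lmin / ((1 + 2 * s) ^ 2 * lmax) - 2 * ϑB ^ 2 * c ^ 2 * s := by
      have hs2 : s ^ 2 < 1 := by nlinarith
      have h1 : α ^ 2 * lmin / (9 * lmax) ≤ α ^ 2 * lmin / ((1 + 2 * s) ^ 2 * lmax) := by
        apply div_le_div_of_nonneg_left (by positivity) hden1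
        nlinarith [mul_lt_mul_of_pos_left hs1 hlmax, mul_lt_mul_of_pos_left hs2 hlmax]
      have h2 : 2 * ϑB ^ 2 * c ^ 2 * s < α ^ 2 * lmin / (9 * lmax) := by
        have h3 : 2 * ϑB ^ 2 * c ^ 2 * s < 2 * ϑB ^ 2 * c ^ 2 * A := by
          nlinarith [mul_lt_mul_of_pos_left hsA
            (show (0:ℝ) < 2 * ϑB ^ 2 * c ^ 2 by positivity)]
        have h4 : 2 * ϑB ^ 2 * c ^ 2 * A ≤ α ^ 2 * lmin / (9 * lmax) := by
          rw [hAdef, ← mul_div_assoc, div_le_div_iff₀ (by positivity) (by positivity)]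
          nlinarith [mul_pos (mul_pos hlmin hlmax) (mul_pos hα hα)]
        linarith
      linarith
    refine ⟨hspos, hs1, hstuff, ?_⟩
    unfold Dden
    rw [hefun0, ← hs]
    rw [hq1s]
    field_simp
    ring
  refine ⟨qbar, hqbarpos,
    fun q1 => Real.sqrt (frak2 α ζ ϑB β ρB ρAB c lmin lmax ϑAB 0 q1 * kb ^ 2), ?_, ?_⟩
  · rintro q1 hq1
    obtain ⟨hspos, hs1, hstuff, hDeq⟩ := key q1 hq1
    have hDpos : 0 < Dden α ϑB β ρB ρAB c lmin lmax ϑAB 0 q1 := by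
      rw [hDeq]; exact mul_pos hspos hstuff
    have hDne : Dden α ϑB β ρB ρAB c lmin lmax ϑAB 0 q1 ≠ 0 := ne_of_gt hDpos
    have hcD : Continuous (fun h => Dden α ϑB β ρB ρAB c lmin lmax ϑAB h q1) := by
      unfold Dden efun; fun_prop
    have hf1 : ContinuousAt (fun h => frak1 α ϑB β ρB ρAB c lmin lmax ϑAB h q1) 0 := by
      unfold frak1
      exact ContinuousAt.div (by unfold efun; fun_prop) hcD.continuousAt hDne
    have hf2 : ContinuousAt (fun h => frak2 α ζ ϑB β ρB ρAB c lmin lmax ϑAB h q1) 0 := by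
      unfold frak2
      exact ContinuousAt.div (by unfold efun; fun_prop) hcD.continuousAt hDne
    refine ⟨fun q0 => Real.sqrt (frak1 α ϑB β ρB ρAB c lmin lmax ϑAB 0 q1 * q0
      + frak2 α ζ ϑB β ρB ρAB c lmin lmax ϑAB 0 q1 * kb ^ 2), ?_, ?_⟩
    · intro q0 _
      exact (((hf1.mul continuousAt_const).add (hf2.mul continuousAt_const)).sqrt
        ).continuousWithinAt.tendsto
    · have hg : ContinuousAt (fun q0 => Real.sqrt
          (frak1 α ϑB β ρB ρAB c lmin lmax ϑAB 0 q1 * q0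
            + frak2 α ζ ϑB β ρB ρAB c lmin lmax ϑAB 0 q1 * kb ^ 2)) 0 :=
        ((continuousAt_const.mul continuousAt_id).add continuousAt_const).sqrt
      have hT := hg.continuousWithinAt.tendsto (s := Set.Ioi 0)
      have h0 : frak1 α ϑB β ρB ρAB c lmin lmax ϑAB 0 q1 * 0
          + frak2 α ζ ϑB β ρB ρAB c lmin lmax ϑAB 0 q1 * kb ^ 2
          = frak2 α ζ ϑB β ρB ρAB c lmin lmax ϑAB 0 q1 * kb ^ 2 := by ring
      rw [h0] at hT
      exact hT
  · -- final limit
    have hsqrtT : Filter.Tendsto Real.sqrt (nhdsWithin 0 (Set.Ioi 0)) (nhds 0) := by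
      have h := Real.continuous_sqrt.tendsto 0
      rw [Real.sqrt_zero] at h
      exact h.mono_left nhdsWithin_le_nhds
    have hGc : ContinuousAt (fun s : ℝ => α * ζ * c ^ 2
        / ((1 + 2 * s) * (α ^ 2 * lmin / ((1 + 2 * s) ^ 2 * lmax)
          - 2 * ϑB ^ 2 * c ^ 2 * s))) 0 := by
      have h1 : ContinuousAt (fun s : ℝ => (1 + 2 * s)
          * (α ^ 2 * lmin / ((1 + 2 * s) ^ 2 * lmax) - 2 * ϑB ^ 2 * c ^ 2 * s)) 0 := by
        apply ContinuousAt.mul (by fun_prop)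
        apply ContinuousAt.sub _ (by fun_prop)
        apply ContinuousAt.div continuousAt_const (by fun_prop)
        norm_num
        positivity
      apply ContinuousAt.div continuousAt_const h1
      show (1 + 2 * (0:ℝ)) * (α ^ 2 * lmin / ((1 + 2 * (0:ℝ)) ^ 2 * lmax)
        - 2 * ϑB ^ 2 * c ^ 2 * 0) ≠ 0
      have he : (1 + 2 * (0:ℝ)) * (α ^ 2 * lmin / ((1 + 2 * (0:ℝ)) ^ 2 * lmax)
          - 2 * ϑB ^ 2 * c ^ 2 * 0) = α ^ 2 * lmin / lmax := by norm_num
      rw [he]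
      positivity
    have hG0 : α * ζ * c ^ 2 / ((1 + 2 * (0:ℝ)) * (α ^ 2 * lmin / ((1 + 2 * (0:ℝ)) ^ 2 * lmax)
        - 2 * ϑB ^ 2 * c ^ 2 * 0)) = ζ * c ^ 2 * lmax / (α * lmin) := by
      norm_num
      field_simp
    have hcomp : Filter.Tendsto (fun q1 => α * ζ * c ^ 2
        / ((1 + 2 * Real.sqrt q1) * (α ^ 2 * lmin / ((1 + 2 * Real.sqrt q1) ^ 2 * lmax)
          - 2 * ϑB ^ 2 * c ^ 2 * Real.sqrt q1)))
        (nhdsWithin 0 (Set.Ioi 0)) (nhds (ζ * c ^ 2 * lmax / (α * lmin))) := by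
      rw [← hG0]
      exact hGc.tendsto.comp hsqrtT
    have hEq : ∀ᶠ q1 in nhdsWithin (0:ℝ) (Set.Ioi 0),
        frak2 α ζ ϑB β ρB ρAB c lmin lmax ϑAB 0 q1 = α * ζ * c ^ 2
        / ((1 + 2 * Real.sqrt q1) * (α ^ 2 * lmin / ((1 + 2 * Real.sqrt q1) ^ 2 * lmax)
          - 2 * ϑB ^ 2 * c ^ 2 * Real.sqrt q1)) := by
      filter_upwards [Ioo_mem_nhdsGT_of_mem ⟨le_refl (0:ℝ), hqbarpos⟩] with q1 hq1
      obtain ⟨hspos, hs1, hstuff, hDeq⟩ := key q1 hq1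
      unfold frak2
      rw [hefun0, hDeq]
      have h12 : (0:ℝ) < 1 + 2 * Real.sqrt q1 := by linarith
      have gen : ∀ a s u t : ℝ, s ≠ 0 → u ≠ 0 → t ≠ 0 →
          (a * s * u⁻¹) / (s * t) = a / (u * t) := by
        intro a s u t hs hu ht
        field_simp
      rw [show (6 * ϑB ^ 2 * c ^ 6 * (0:ℝ) ^ 2 + 3 * β ^ 2 * c ^ 4 * (0:ℝ) ^ 2
          + α * ζ * c ^ 2 * Real.sqrt q1 * (1 + 2 * Real.sqrt q1)⁻¹)
          = α * ζ * c ^ 2 * Real.sqrt q1 * (1 + 2 * Real.sqrt q1)⁻¹ from by ring]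
      exact gen _ _ _ _ (ne_of_gt hspos) (ne_of_gt h12) (ne_of_gt hstuff)
    have hfrak2T : Filter.Tendsto (fun q1 => frak2 α ζ ϑB β ρB ρAB c lmin lmax ϑAB 0 q1)
        (nhdsWithin 0 (Set.Ioi 0)) (nhds (ζ * c ^ 2 * lmax / (α * lmin))) :=
      hcomp.congr' (hEq.mono fun q1 h => h.symm)
    have hsq : ContinuousAt (fun x : ℝ => Real.sqrt (x * kb ^ 2))
        (ζ * c ^ 2 * lmax / (α * lmin)) :=
      (continuousAt_id.mul continuousAt_const).sqrt
    have hT := hsq.tendsto.comp hfrak2T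
    have hval : Real.sqrt (ζ * c ^ 2 * lmax / (α * lmin) * kb ^ 2)
        = kb * c * Real.sqrt (ζ * lmax / (α * lmin)) := by
      rw [show ζ * c ^ 2 * lmax / (α * lmin) * kb ^ 2
          = (kb * c) ^ 2 * (ζ * lmax / (α * lmin)) by ring,
        Real.sqrt_mul (by positivity), Real.sqrt_sq (by positivity)]
    rw [← hval]
    exact hT
end

section
/- Let $\mathcal{Y}, \mathcal{Z}, \mathcal{Y}_k, \mathcal{Z}_k \in \mathbb{R}^{p \times n}$ and let $\mathcal{U} \in \mathbb{R}^{p \times p}$ be symmetric positive definite. If the symmetric block matrix $\begin{bmatrix} \mathrm{Sym}\big((\mathcal{Y} - \mathcal{Y}_k)^\top \mathcal{Z}_k + \mathcal{Y}_k^\top(\mathcal{Z} - \mathcal{Z}_k) + \mathcal{Y}_k^\top \mathcal{Z}_k\big) & (\mathcal{Y} - \mathcal{Y}_k)^\top & (\mathcal{Z} - \mathcal{Z}_k)^\top \\ \mathcal{Y} - \mathcal{Y}_k & -\mathcal{U} & 0 \\ \mathcal{Z} - \mathcal{Z}_k & 0 & -\mathcal{U}^{-1} \end{bmatrix} \preceq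 0$, then $\mathrm{Sym}(\mathcal{Y}^\top \mathcal{Z}) \preceq 0$. -/
/-!
Write `A = Y - Yk` and `B = Z - Zk`, so that `YᵀZ = AᵀB + L` with `L` the linearized product.
Taking the Schur complement of the invertible block `diag(U, U⁻¹)` in the negated block
matrix gives `Sym L + AᵀU⁻¹A + BᵀUB ⪯ 0`, and Young's inequality
`Sym(AᵀB) ⪯ AᵀU⁻¹A + BᵀUB` holds because the difference is `(A - UB)ᵀ U⁻¹ (A - UB)`.
Adding the two gives `Sym(YᵀZ) ⪯ 0`.
-/

open Matrix

namespace Matrix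

variable {m n R K : Type*} [Fintype m] [Fintype n] [DecidableEq m]

/-- Unlike `Matrix.PosSemidef.fromBlocks₂₂`, this direction only needs `D` to be invertible. -/
theorem PosSemidef.of_fromBlocks₂₂ [DecidableEq n] [CommRing R] [PartialOrder R] [StarRing R]
    {A : Matrix m m R} {B : Matrix m n R} {D : Matrix n n R}
    (h : (fromBlocks A B Bᴴ D).PosSemidef) (hD : IsUnit D) :
    (A - B * D⁻¹ * Bᴴ).PosSemidef := by
  have hdet := (isUnit_iff_isUnit_det D).mp hD
  have hMP : fromBlocks A B Bᴴ D * (fromRows 1 (-(D⁻¹ * Bᴴ)) : Matrix (m ⊕ n) m R) =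
      fromRows (A - B * D⁻¹ * Bᴴ) 0 := by
    rw [fromBlocks_mul_fromRows, Matrix.mul_neg, Matrix.mul_neg,
      mul_nonsing_inv_cancel_left _ _ hdet, Matrix.mul_one, Matrix.mul_one, add_neg_cancel,
      Matrix.mul_assoc, sub_eq_add_neg]
  have hcong := h.conjTranspose_mul_mul_same (fromRows 1 (-(D⁻¹ * Bᴴ)))
  rwa [Matrix.mul_assoc, hMP, conjTranspose_fromRows_eq_fromCols_conjTranspose,
    fromCols_mul_fromRows, conjTranspose_one, Matrix.one_mul, Matrix.mul_zero, add_zero] at hcong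

theorem PosSemidef.of_fromBlocks₂₂_fromBlocks_inv [DecidableEq n] [CommRing R] [PartialOrder R]
    [StarRing R] {S : Matrix n n R} {A B : Matrix m n R} {U : Matrix m m R}
    (h : (fromBlocks S (fromCols Aᴴ Bᴴ) (fromRows A B) (fromBlocks U 0 0 U⁻¹)).PosSemidef)
    (hU : IsUnit U) :
    (S - (Aᴴ * U⁻¹ * A + Bᴴ * U * B)).PosSemidef := by
  have hU' : IsUnit U⁻¹ := isUnit_nonsing_inv_iff.mpr hU
  have hDinv : (fromBlocks U 0 0 U⁻¹)⁻¹ = fromBlocks U⁻¹ 0 0 U := by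
    rw [inv_fromBlocks_zero₂₁_of_isUnit_iff _ _ _ (iff_of_true hU hU'),
      nonsing_inv_nonsing_inv _ ((isUnit_iff_isUnit_det U).mp hU), Matrix.mul_zero,
      Matrix.zero_mul, neg_zero]
  rw [← conjTranspose_conjTranspose (fromRows A B),
    conjTranspose_fromRows_eq_fromCols_conjTranspose] at h
  simpa only [hDinv, fromCols_mul_fromBlocks, fromCols_mul_fromRows,
    conjTranspose_fromCols_eq_fromRows_conjTranspose, conjTranspose_conjTranspose,
    Matrix.mul_zero, add_zero, zero_add]
    using h.of_fromBlocks₂₂ (isUnit_fromBlocks_zero₂₁.mpr ⟨hU, hU'⟩)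

theorem PosDef.young [Field K] [PartialOrder K] [StarRing K]
    {U : Matrix m m K} (hU : U.PosDef) (A B : Matrix m n K) :
    (Aᴴ * U⁻¹ * A + Bᴴ * U * B - (Aᴴ * B + Bᴴ * A)).PosSemidef := by
  have hdet := (isUnit_iff_isUnit_det U).mp hU.isUnit
  convert hU.inv.posSemidef.conjTranspose_mul_mul_same (A - U * B) using 1
  simp only [conjTranspose_sub, conjTranspose_mul, hU.isHermitian.eq, Matrix.sub_mul,
    Matrix.mul_sub, Matrix.mul_assoc, nonsing_inv_mul_cancel_left _ _ hdet,
    mul_nonsing_inv_cancel_left _ _ hdet]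
  abel

end Matrix

/-- Linearization lemma (Young's inequality + Schur complement) used in the sequential
parametric convex approximation: if the `3×3` block matrix
`[Sym((Y-Yk)ᵀZk + Ykᵀ(Z-Zk) + YkᵀZk), (Y-Yk)ᵀ, (Z-Zk)ᵀ; Y-Yk, -U, 0; Z-Zk, 0, -U⁻¹] ⪯ 0`
for some symmetric positive definite `U`, then `Sym(YᵀZ) ⪯ 0`. -/
theorem linearization_lemma {p n : ℕ}
    (Y Z Yk Zk : Matrix (Fin p) (Fin n) ℝ)
    (U : Matrix (Fin p) (Fin p) ℝ) (hU : U.PosDef)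
    (hblk : (-(Matrix.fromBlocks
        (((Y - Yk)ᵀ * Zk + Ykᵀ * (Z - Zk) + Ykᵀ * Zk)
          + ((Y - Yk)ᵀ * Zk + Ykᵀ * (Z - Zk) + Ykᵀ * Zk)ᵀ)
        (Matrix.fromCols (Y - Yk)ᵀ (Z - Zk)ᵀ)
        (Matrix.fromRows (Y - Yk) (Z - Zk))
        (Matrix.fromBlocks (-U) 0 0 (-U⁻¹)))).PosSemidef) :
    (-(Yᵀ * Z + (Yᵀ * Z)ᵀ)).PosSemidef := by
  set S := ((Y - Yk)ᵀ * Zk + Ykᵀ * (Z - Zk) + Ykᵀ * Zk)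
    + ((Y - Yk)ᵀ * Zk + Ykᵀ * (Z - Zk) + Ykᵀ * Zk)ᵀ with hS
  have hblk' : (fromBlocks (-S) (fromCols (-(Y - Yk))ᴴ (-(Z - Zk))ᴴ)
      (fromRows (-(Y - Yk)) (-(Z - Zk))) (fromBlocks U 0 0 U⁻¹)).PosSemidef := by
    simpa only [fromBlocks_neg, fromCols_neg, fromRows_neg, neg_neg, neg_zero, conjTranspose_neg,
      conjTranspose_eq_transpose_of_trivial, transpose_neg] using hblk
  have hschur := hblk'.of_fromBlocks₂₂_fromBlocks_inv hU.isUnit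
  have hyoung := hU.young (-(Y - Yk)) (-(Z - Zk))
  have hsym : -(Yᵀ * Z + (Yᵀ * Z)ᵀ) =
      -S - ((-(Y - Yk))ᴴ * -(Z - Zk) + (-(Z - Zk))ᴴ * -(Y - Yk)) := by
    simp only [hS, conjTranspose_eq_transpose_of_trivial, transpose_add, transpose_sub,
      transpose_mul, transpose_transpose, transpose_neg, Matrix.neg_mul, Matrix.mul_neg,
      Matrix.sub_mul, Matrix.mul_sub]
    abel
  simpa only [hsym, sub_add_sub_cancel] using hschur.add hyoung
end
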